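/- Let (G_n,d_n) be a sequence of admissible pairs with v(G_n) ≥ 1, d_n > 1 for all n, and d_n → ∞. Then for every connected graph F, the sequence t(F,G_n,d_n) converges if and only if the sequence t_inj(F,G_n,d_n) converges, and in that case the two limits are equal. -/

import Mathlib

open Filter Topology

noncomputable def homCount {α β : Type*} (F : SimpleGraph α) (G : SimpleGraph β) : ℕ :=
  Nat.card (F →g G)

noncomputable def injCount {α β : Type*} (F : SimpleGraph α) (G : SimpleGraph β) : ℕ :=
  Nat.card {f : F →g G // Function.Injective f}

noncomputable def vdegree {α : Type*} (G : SimpleGraph α) (x : α) : ℕ :=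
  Nat.card (G.neighborSet x)

noncomputable def edgeCount {α : Type*} (G : SimpleGraph α) : ℕ := Nat.card G.edgeSet

noncomputable def numComponents {α : Type*} (F : SimpleGraph α) : ℕ :=
  Nat.card F.ConnectedComponent

noncomputable def numBigComponents {α : Type*} (F : SimpleGraph α) : ℕ :=
  Nat.card {c : F.ConnectedComponent // 2 ≤ Nat.card c.supp}

def Admissible {α : Type*} (G : SimpleGraph α) (d : ℝ) : Prop :=
  1 ≤ d ∧ ∀ x : α, (vdegree G x : ℝ) ≤ d

noncomputable def homDensity {α β : Type*} (F : SimpleGraph α) (G : SimpleGraph β) (d : ℝ) : ℝ :=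
  (homCount F G : ℝ) /
    ((Nat.card β : ℝ) ^ numComponents F * d ^ (Nat.card α - numComponents F))

noncomputable def injDensity {α β : Type*} (F : SimpleGraph α) (G : SimpleGraph β) (d : ℝ) : ℝ :=
  (injCount F G : ℝ) /
    ((Nat.card β : ℝ) ^ numComponents F * d ^ numBigComponents F *
      (d - 1) ^ (Nat.card α - numComponents F - numBigComponents F))

/-!
Write `k = v(F)` and `P = v(G) d^(k-1)`. Deleting a vertex that keeps `F` connected and noting
that its image must be a neighbour of the image of an adjacent vertex gives `hom(F,G) ≤ P` by
induction. A non-injective homomorphism identifies two distinct, necessarily non-adjacent,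
vertices `a, b`, so it factors through the connected graph obtained by contracting `b` into `a`,
which has `k - 1` vertices; hence there are at most `k² v(G) d^(k-2) = (k²/d) P` of them. Since
`t = hom/P` and `t_inj = (inj/P) (d/(d-1))^(k-2)`, this gives
`|t - t_inj| ≤ k²/d + (d/(d-1))^(k-2) - 1 → 0`.
-/

theorem Nat.card_le_card_mul_of_card_fiber_le {X Y : Type*} [Finite X] [Finite Y] (r : X → Y)
    {c : ℝ} (h : ∀ y, (Nat.card {x // r x = y} : ℝ) ≤ c) :
    (Nat.card X : ℝ) ≤ Nat.card Y * c := by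
  have := Fintype.ofFinite Y
  rw [← Nat.card_congr (Equiv.sigmaFiberEquiv r), Nat.card_sigma,
    Nat.card_eq_fintype_card (α := Y)]
  push_cast
  simpa using Finset.sum_le_card_nsmul Finset.univ _ c fun y _ => h y

theorem Nat.card_add_card_subtype_not {X : Type*} [Finite X] (p : X → Prop) :
    Nat.card {x // p x} + Nat.card {x // ¬ p x} = Nat.card X := by
  classical
  rw [← Nat.card_sum, Nat.card_congr (Equiv.sumCompl p)]

namespace SimpleGraph

variable {α β : Type*} {H : SimpleGraph α} {Γ : SimpleGraph β} {d : ℝ}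

theorem card_hom_le_card_hom_induce_mul [Finite α] [Finite β] {u v : α} (huv : H.Adj u v)
    (hΓ : ∀ y, (vdegree Γ y : ℝ) ≤ d) :
    (Nat.card (H →g Γ) : ℝ) ≤ Nat.card (H.induce {v}ᶜ →g Γ) * d := by
  refine Nat.card_le_card_mul_of_card_fiber_le (fun f => f.comp (Embedding.induce _).toHom)
    fun g => (Nat.cast_le.2 <| Nat.card_le_card_of_injective
      (fun f : {f : H →g Γ // _} => (⟨f.1 v, ?_⟩ : Γ.neighborSet (g ⟨u, huv.ne⟩)))
      ?_).trans (hΓ _)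
  · obtain ⟨f, rfl⟩ := f
    exact f.map_adj huv
  · rintro ⟨f₁, hf₁⟩ ⟨f₂, rfl⟩ hv
    refine Subtype.ext (RelHom.ext fun x => ?_)
    by_cases hx : x = v
    · subst hx
      exact congrArg Subtype.val hv
    · exact DFunLike.congr_fun hf₁ ⟨x, hx⟩

theorem card_hom_le_of_connected [Finite α] [Finite β] (hd : 0 ≤ d)
    (hΓ : ∀ y, (vdegree Γ y : ℝ) ≤ d) (hH : H.Connected) :
    (Nat.card (H →g Γ) : ℝ) ≤ Nat.card β * d ^ (Nat.card α - 1) := by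
  obtain ⟨n, hn⟩ : ∃ n, Nat.card α = n := ⟨_, rfl⟩
  induction n generalizing α with
  | zero =>
    have := hH.nonempty
    exact absurd hn Nat.card_pos.ne'
  | succ n ih =>
    rcases subsingleton_or_nontrivial α with hα | hα
    · have := hH.nonempty
      have hn : n = 0 := by have := Nat.card_unique (α := α); omega
      subst hn
      calc (Nat.card (H →g Γ) : ℝ) ≤ Nat.card (α → β) :=
            Nat.cast_le.2 (Nat.card_le_card_of_injective _ DFunLike.coe_injective)
        _ = Nat.card β * d ^ (Nat.card α - 1) := by simp [Nat.card_fun]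
    · obtain ⟨v, hv⟩ := hH.exists_connected_induce_compl_singleton_of_finite_nontrivial
      obtain ⟨u, hvu⟩ := hH.preconnected.exists_adj_of_nontrivial v
      have hcard : Nat.card ({v}ᶜ : Set α) = n := by
        rw [Nat.card_coe_set_eq, Set.ncard_compl, Set.ncard_singleton, hn, Nat.add_sub_cancel]
      have hn1 : 1 ≤ n := hcard ▸ Nat.card_pos_iff.2 ⟨⟨⟨u, hvu.ne'⟩⟩, inferInstance⟩
      calc (Nat.card (H →g Γ) : ℝ) ≤ Nat.card (H.induce {v}ᶜ →g Γ) * d :=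
            card_hom_le_card_hom_induce_mul hvu.symm hΓ
        _ ≤ Nat.card β * d ^ (n - 1) * d := by
            gcongr
            simpa [hcard] using ih hv hcard
        _ = Nat.card β * d ^ (Nat.card α - 1) := by
            rw [mul_assoc, ← pow_succ, hn]
            congr 2
            omega

open Classical in
/-- `H.map (mergeVertex hab)` is `H` with `b` contracted into `a`. -/
noncomputable def mergeVertex {a b : α} (hab : a ≠ b) (x : α) : ({b}ᶜ : Set α) :=
  if h : x = b then ⟨a, hab⟩ else ⟨x, h⟩

theorem mergeVertex_surjective {a b : α} (hab : a ≠ b) : Function.Surjective (mergeVertex hab) :=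
  fun x => ⟨x, dif_neg x.2⟩

theorem apply_mergeVertex {a b : α} (hab : a ≠ b) {f : α → β} (hf : f a = f b) (x : α) :
    f (mergeVertex hab x) = f x := by
  unfold mergeVertex
  split_ifs with h
  · rw [hf, h]
  · rfl

theorem mergeVertex_ne_of_adj {a b : α} (hab : a ≠ b) (hnadj : ¬H.Adj a b) {x y : α}
    (hxy : H.Adj x y) : mergeVertex hab x ≠ mergeVertex hab y := by
  intro h
  replace h := congrArg Subtype.val h
  unfold mergeVertex at h
  split_ifs at h with hx hy hy <;> dsimp only at h
  · exact hxy.ne (hx.trans hy.symm)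
  · subst hx h
    exact hnadj hxy.symm
  · subst hy h
    exact hnadj hxy
  · exact hxy.ne h

theorem card_hom_apply_eq_le [Finite α] [Finite β] (hd : 0 ≤ d)
    (hΓ : ∀ y, (vdegree Γ y : ℝ) ≤ d)
    (hH : H.Connected) {a b : α} (hab : a ≠ b) :
    (Nat.card {f : H →g Γ // f a = f b} : ℝ) ≤ Nat.card β * d ^ (Nat.card α - 2) := by
  by_cases hadj : H.Adj a b
  · have : IsEmpty {f : H →g Γ // f a = f b} :=
      ⟨fun f => (f.1.map_adj hadj).ne f.2⟩
    rw [Nat.card_of_isEmpty, Nat.cast_zero]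
    positivity
  set π := mergeVertex hab
  have hconn : (H.map π).Connected :=
    hH.map (Hom.map π H (mergeVertex_ne_of_adj hab hadj)) (mergeVertex_surjective hab)
  let descend (f : {f : H →g Γ // f a = f b}) : H.map π →g Γ :=
    { toFun := fun w => f.1 w
      map_rel' := by
        rintro _ _ ⟨-, x, y, hxy, rfl, rfl⟩
        simpa only [π, apply_mergeVertex hab f.2] using f.1.map_adj hxy }
  have hdescend : Function.Injective descend := by
    intro f₁ f₂ h
    refine Subtype.ext (RelHom.ext fun x => ?_)
    have := DFunLike.congr_fun h (π x)
    simpa only [descend, RelHom.coeFn_mk, π, apply_mergeVertex hab f₁.2,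
      apply_mergeVertex hab f₂.2] using this
  have hcard : Nat.card ({b}ᶜ : Set α) - 1 = Nat.card α - 2 := by
    rw [Nat.card_coe_set_eq, Set.ncard_compl, Set.ncard_singleton]
    omega
  calc (Nat.card {f : H →g Γ // f a = f b} : ℝ) ≤ Nat.card (H.map π →g Γ) :=
        Nat.cast_le.2 (Nat.card_le_card_of_injective _ hdescend)
    _ ≤ Nat.card β * d ^ (Nat.card α - 2) := hcard ▸ card_hom_le_of_connected hd hΓ hconn

theorem card_not_injective_le [Finite α] [Finite β] (hd : 0 ≤ d)
    (hΓ : ∀ y, (vdegree Γ y : ℝ) ≤ d) (hH : H.Connected) :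
    (Nat.card {f : H →g Γ // ¬Function.Injective f} : ℝ) ≤
      Nat.card α ^ 2 * (Nat.card β * d ^ (Nat.card α - 2)) := by
  have hcollide (f : {f : H →g Γ // ¬Function.Injective f}) :
      ∃ p : {p : α × α // p.1 ≠ p.2}, f.1 p.1.1 = f.1 p.1.2 := by
    obtain ⟨a, b, hfab, hab⟩ := Function.not_injective_iff.1 f.2
    exact ⟨⟨(a, b), hab⟩, hfab⟩
  choose collision hcollision using hcollide
  have hfiber (p : {p : α × α // p.1 ≠ p.2}) :
      (Nat.card {f // collision f = p} : ℝ) ≤ Nat.card β * d ^ (Nat.card α - 2) := by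
    refine le_trans (Nat.cast_le.2 <| Nat.card_le_card_of_injective
      (fun f => (⟨f.1.1, by obtain ⟨f, rfl⟩ := f; exact hcollision f⟩ :
        {f : H →g Γ // f p.1.1 = f p.1.2})) ?_)
      (card_hom_apply_eq_le hd hΓ hH p.2)
    intro f₁ f₂ h
    have := congrArg Subtype.val h
    exact Subtype.ext (Subtype.ext this)
  have hpairs : (Nat.card {p : α × α // p.1 ≠ p.2} : ℝ) ≤ Nat.card α ^ 2 := by
    rw [← Nat.cast_pow, Nat.cast_le, sq, ← Nat.card_prod]
    exact Nat.card_le_card_of_injective _ Subtype.val_injective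
  calc (Nat.card {f : H →g Γ // ¬Function.Injective f} : ℝ)
      ≤ Nat.card {p : α × α // p.1 ≠ p.2} * (Nat.card β * d ^ (Nat.card α - 2)) :=
        Nat.card_le_card_mul_of_card_fiber_le collision hfiber
    _ ≤ Nat.card α ^ 2 * (Nat.card β * d ^ (Nat.card α - 2)) := by gcongr

end SimpleGraph

section Densities

open SimpleGraph

variable {α β : Type*} {F : SimpleGraph α} {Γ : SimpleGraph β} {d : ℝ}

theorem numComponents_eq_one_of_connected (hF : F.Connected) : numComponents F = 1 :=
  have := hF.preconnected.subsingleton_connectedComponent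
  have := hF.nonempty
  Nat.card_unique

theorem numBigComponents_eq_of_connected (hF : F.Connected) :
    numBigComponents F = if 2 ≤ Nat.card α then 1 else 0 := by
  have hsupp (c : F.ConnectedComponent) : Nat.card c.supp = Nat.card α := by
    rw [Set.eq_univ_of_forall fun x => (c.mem_supp_iff x).2 ?_]
    · exact Nat.card_univ
    · exact hF.preconnected.subsingleton_connectedComponent.elim _ _
  simp_rw [numBigComponents, hsupp]
  split_ifs with hk
  · rw [Nat.card_congr (Equiv.subtypeUnivEquiv fun _ => hk)]
    exact numComponents_eq_one_of_connected hF
  · have : IsEmpty {c : F.ConnectedComponent // 2 ≤ Nat.card α} := ⟨fun c => hk c.2⟩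
    exact Nat.card_of_isEmpty

theorem homDensity_eq_of_connected (hF : F.Connected) :
    homDensity F Γ d = homCount F Γ / (Nat.card β * d ^ (Nat.card α - 1)) := by
  rw [homDensity, numComponents_eq_one_of_connected hF, pow_one]

theorem injDensity_eq_of_connected [Finite α] (hF : F.Connected) (hd : 1 < d) :
    injDensity F Γ d =
      injCount F Γ / (Nat.card β * d ^ (Nat.card α - 1)) *
        (d / (d - 1)) ^ (Nat.card α - 2) := by
  have := hF.nonempty
  have hk : 0 < Nat.card α := Nat.card_pos
  rw [injDensity, numComponents_eq_one_of_connected hF, numBigComponents_eq_of_connected hF]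
  split_ifs with h2
  · obtain ⟨j, hj⟩ := Nat.exists_eq_add_of_le' h2
    have hd0 : d ≠ 0 := (by linarith : (0 : ℝ) < d).ne'
    have hd1 : d - 1 ≠ 0 := by linarith
    simp only [hj, pow_one, show j + 2 - 1 = j + 1 by omega, Nat.add_sub_cancel]
    rw [div_pow, div_mul_div_comm, show (Nat.card β : ℝ) * d ^ (j + 1) * (d - 1) ^ j =
      d ^ j * (Nat.card β * d * (d - 1) ^ j) by ring, mul_comm (injCount F Γ : ℝ),
      mul_div_mul_left _ _ (pow_ne_zero j hd0)]
  · rw [show Nat.card α = 1 by omega]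
    simp

theorem abs_homDensity_sub_injDensity_le [Finite α] [Finite β] (hF : F.Connected) (hd : 1 < d)
    (hΓ : ∀ y, (vdegree Γ y : ℝ) ≤ d) :
    |homDensity F Γ d - injDensity F Γ d| ≤
      Nat.card α ^ 2 / d + ((d / (d - 1)) ^ (Nat.card α - 2) - 1) := by
  rw [homDensity_eq_of_connected hF, injDensity_eq_of_connected hF hd]
  set k := Nat.card α
  set P : ℝ := Nat.card β * d ^ (k - 1) with hPdef
  set r : ℝ := (d / (d - 1)) ^ (k - 2)
  have hP : 0 ≤ P := by positivity
  have hr : 1 ≤ r := one_le_pow₀ ((one_le_div (by linarith)).2 (by linarith))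
  have hsplit : (homCount F Γ : ℝ) =
      injCount F Γ + Nat.card {f : F →g Γ // ¬Function.Injective f} := by
    exact_mod_cast (Nat.card_add_card_subtype_not _).symm
  have hhom : (homCount F Γ : ℝ) ≤ P := card_hom_le_of_connected (by linarith) hΓ hF
  have hgap : (Nat.card {f : F →g Γ // ¬Function.Injective f} : ℝ) ≤ k ^ 2 / d * P := by
    rcases Nat.lt_or_ge k 2 with hk | hk
    · have : Subsingleton α := (Finite.card_le_one_iff_subsingleton).1 (by omega)
      have : IsEmpty {f : F →g Γ // ¬Function.Injective f} :=
        ⟨fun f => f.2 (Function.injective_of_subsingleton _)⟩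
      rw [Nat.card_of_isEmpty, Nat.cast_zero]
      positivity
    · calc _ ≤ (k : ℝ) ^ 2 * (Nat.card β * d ^ (k - 2)) :=
            card_not_injective_le (by linarith) hΓ hF
        _ = k ^ 2 / d * P := by
          rw [hPdef, show k - 1 = k - 2 + 1 by omega, pow_succ d (k - 2)]
          field_simp
  have hinj : (injCount F Γ : ℝ) / P ≤ 1 := div_le_one_of_le₀ (by linarith) hP
  calc |homCount F Γ / P - injCount F Γ / P * r|
      = |Nat.card {f : F →g Γ // ¬Function.Injective f} / P - injCount F Γ / P * (r - 1)| := by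
        rw [hsplit]
        ring_nf
    _ ≤ |Nat.card {f : F →g Γ // ¬Function.Injective f} / P| +
          |injCount F Γ / P * (r - 1)| :=
        abs_sub _ _
    _ ≤ k ^ 2 / d + (r - 1) := by
        rw [abs_of_nonneg (by positivity), abs_of_nonneg (mul_nonneg (by positivity) (by linarith))]
        exact add_le_add (div_le_of_le_mul₀ hP (by positivity) hgap)
          (mul_le_of_le_one_left (by linarith) hinj)

theorem tendsto_div_sub_one_nhds_one {ι : Type*} {l : Filter ι} {f : ι → ℝ}
    (hf : Tendsto f l atTop) : Tendsto (fun i => f i / (f i - 1)) l (𝓝 1) := by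
  have : Tendsto (fun i => (1 - (f i)⁻¹)⁻¹) l (𝓝 1) := by
    simpa using (tendsto_const_nhds.sub (tendsto_inv_atTop_zero.comp hf)).inv₀
      (by norm_num : (1 : ℝ) - 0 ≠ 0)
  refine this.congr' ((hf.eventually_gt_atTop 1).mono fun i hi => ?_)
  have : f i - 1 ≠ 0 := by linarith
  field_simp

theorem tendsto_dist_homDensity_injDensity {β : ℕ → Type*} [∀ n, Finite (β n)]
    {G : ∀ n, SimpleGraph (β n)} {d : ℕ → ℝ}
    (hG : ∀ n y, (vdegree (G n) y : ℝ) ≤ d n)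
    (hd : Tendsto d atTop atTop) [Finite α] (hF : F.Connected) :
    Tendsto (fun n => dist (homDensity F (G n) (d n)) (injDensity F (G n) (d n)))
      atTop (𝓝 0) := by
  have hbound : Tendsto
      (fun n => Nat.card α ^ 2 / d n + ((d n / (d n - 1)) ^ (Nat.card α - 2) - 1))
      atTop (𝓝 0) := by
    simpa using (tendsto_const_nhds.div_atTop hd).add
      (((tendsto_div_sub_one_nhds_one hd).pow (Nat.card α - 2)).sub_const 1)
  refine squeeze_zero' (Eventually.of_forall fun n => dist_nonneg)
    ((hd.eventually_gt_atTop 1).mono fun n hn => ?_) hbound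
  rw [Real.dist_eq]
  exact abs_homDensity_sub_injDensity_le hF hn (hG n)

end Densities

theorem stmt2_general (m : ℕ → ℕ) (G : ∀ n, SimpleGraph (Fin (m n))) (d : ℕ → ℝ)
    (hadm : ∀ n, Admissible (G n) (d n))
    (hdtop : Tendsto d atTop atTop)
    {α : Type*} [Fintype α] (F : SimpleGraph α) (hF : F.Connected) :
    ((∃ L : ℝ, Tendsto (fun n => homDensity F (G n) (d n)) atTop (𝓝 L)) ↔
      (∃ L : ℝ, Tendsto (fun n => injDensity F (G n) (d n)) atTop (𝓝 L))) ∧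
    ∀ L L' : ℝ, Tendsto (fun n => homDensity F (G n) (d n)) atTop (𝓝 L) →
      Tendsto (fun n => injDensity F (G n) (d n)) atTop (𝓝 L') → L = L' := by
  have hdist := tendsto_dist_homDensity_injDensity (fun n => (hadm n).2) hdtop hF
  have hdist' : Tendsto (fun n => dist (injDensity F (G n) (d n)) (homDensity F (G n) (d n)))
      atTop (𝓝 0) := hdist.congr fun n => dist_comm _ _
  exact ⟨⟨fun ⟨L, hL⟩ => ⟨L, hL.congr_dist hdist⟩,
      fun ⟨L, hL⟩ => ⟨L, hL.congr_dist hdist'⟩⟩,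
    fun _ _ hL hL' => tendsto_nhds_unique (hL.congr_dist hdist) hL'⟩

/-- For admissible pairs `(Gₙ, dₙ)` with `dₙ → ∞`, and a connected graph `F`,
the sequence `t(F,Gₙ,dₙ)` converges iff `t_inj(F,Gₙ,dₙ)` converges, with the same limit. -/
theorem stmt2 (m : ℕ → ℕ) (G : ∀ n, SimpleGraph (Fin (m n))) (d : ℕ → ℝ)
    (hm : ∀ n, 1 ≤ m n) (hd : ∀ n, 1 < d n) (hadm : ∀ n, Admissible (G n) (d n))
    (hdtop : Tendsto d atTop atTop)
    {α : Type*} [Fintype α] (F : SimpleGraph α) (hF : F.Connected) :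
    ((∃ L : ℝ, Tendsto (fun n => homDensity F (G n) (d n)) atTop (𝓝 L)) ↔
      (∃ L : ℝ, Tendsto (fun n => injDensity F (G n) (d n)) atTop (𝓝 L))) ∧
    ∀ L L' : ℝ, Tendsto (fun n => homDensity F (G n) (d n)) atTop (𝓝 L) →
      Tendsto (fun n => injDensity F (G n) (d n)) atTop (𝓝 L') → L = L' :=
  stmt2_general m G d hadm hdtop F hF
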